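/- Computation Lemma for ≃_R: Let Γ = (C, A, Δ) be a normed BPA system, R ⊆ C_G, and let α, α', α'' be processes in R-normal-form. If α ⟹_R α' ⟹_R α'' and α ≃_R α'', then α' ≃_R α. -/

import Mathlib

open Relation

/-- A BPA system over constants `C` and actions `A`: a distinguished silent
action `tau`, and a finite set of transition rules `X —ℓ→ α`, where `C` and
`A` are finite. -/
structure BPA (C A : Type) where
  tau : A
  rules : Set (C × A × List C)
  finC : Finite C
  finA : Finite A
  finRules : rules.Finite

namespace BPA

variable {C A : Type}

/-- One-step labelled transition between processes.  Processes are strings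
over `C` (lists, with the leftmost constant acting first). -/
def Step (Γ : BPA C A) (ℓ : A) (p q : List C) : Prop :=
  ∃ X γ β, (X, ℓ, γ) ∈ Γ.rules ∧ p = X :: β ∧ q = γ ++ β

/-- A transition carrying an arbitrary label. -/
def AnyStep (Γ : BPA C A) (p q : List C) : Prop := ∃ ℓ, Γ.Step ℓ p q

/-- `⟹` : the reflexive transitive closure of silent steps. -/
def TauStar (Γ : BPA C A) : List C → List C → Prop := ReflTransGen (Γ.Step Γ.tau)

/-- A process is normed if it can reach the empty process `ε`. -/
def NormedProc (Γ : BPA C A) (p : List C) : Prop := ReflTransGen Γ.AnyStep p []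

/-- The BPA system is normed. -/
def Normed (Γ : BPA C A) : Prop := ∀ X : C, Γ.NormedProc [X]

/-- A chain of `s`-steps starting at `start` in which every visited state is
related by `r` to the process `anchor`. -/
def RelChain (s : List C → List C → Prop) (r : List C → List C → Prop)
    (anchor : List C) : List C → List C → Prop :=
  ReflTransGen fun x y => s x y ∧ r anchor y

/-- Branching bisimulation (an equivalence relation by convention). -/
def IsBranchingBisim (Γ : BPA C A) (r : List C → List C → Prop) : Prop :=
  Equivalence r ∧ ∀ α β, r α β →
    ((∀ a, a ≠ Γ.tau → ∀ α', Γ.Step a α α' →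
        ∃ β'' β', RelChain (Γ.Step Γ.tau) r β β β'' ∧ Γ.Step a β'' β' ∧ r α' β') ∧
     (∀ α', Γ.Step Γ.tau α α' → ¬ r α α' →
        ∃ β'' β', RelChain (Γ.Step Γ.tau) r β β β'' ∧ Γ.Step Γ.tau β'' β' ∧
          ¬ r β'' β' ∧ r α' β'))

/-- Branching bisimilarity `≃` : the largest branching bisimulation. -/
def Bisim (Γ : BPA C A) (α β : List C) : Prop :=
  ∃ r, Γ.IsBranchingBisim r ∧ r α β

/-- A ground process: it can silently reach `ε`. -/
def Ground (Γ : BPA C A) (p : List C) : Prop := Γ.TauStar p []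

/-- The set `C_G` of ground constants. -/
def GroundC (Γ : BPA C A) : Set C := {X | Γ.Ground [X]}

/-- `R`-equality `=_R`: the two processes differ only in suffixes over `R`. -/
def REq (R : Set C) (α β : List C) : Prop :=
  ∃ ζ a b, α = ζ ++ a ∧ β = ζ ++ b ∧ (∀ X ∈ a, X ∈ R) ∧ (∀ X ∈ b, X ∈ R)

open Classical in
/-- The `R`-normal form `α_R` of a process: delete the maximal suffix over `R`. -/
noncomputable def nf (R : Set C) (α : List C) : List C :=
  (α.reverse.dropWhile fun X => decide (X ∈ R)).reverse

/-- A process is in `R`-normal form. -/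
def InNF (R : Set C) (α : List C) : Prop := nf R α = α

/-- The `R`-transition relation `—ℓ→_R` between `R`-normal forms. -/
def StepR (Γ : BPA C A) (R : Set C) (ℓ : A) (ζ η : List C) : Prop :=
  ∃ α β, ζ = nf R α ∧ η = nf R β ∧ Γ.Step ℓ α β

/-- `⟹_R`. -/
def TauStarR (Γ : BPA C A) (R : Set C) : List C → List C → Prop :=
  ReflTransGen (Γ.StepR R Γ.tau)

/-- `R`-bisimulation: an equivalence relation containing `=_R` satisfying
ground preservation and the relativized branching transfer conditions. -/
def IsRBisim (Γ : BPA C A) (R : Set C) (r : List C → List C → Prop) : Prop :=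
  Equivalence r ∧ (∀ α β, REq R α β → r α β) ∧
  ∀ α β, r α β →
    ((Γ.TauStar α [] → Γ.TauStar β []) ∧
     (∀ α', Γ.Step Γ.tau α α' → ¬ r α α' →
        ∃ β'' β', RelChain (Γ.StepR R Γ.tau) r β (nf R β) β'' ∧
          Γ.StepR R Γ.tau β'' β' ∧ ¬ r β'' β' ∧ r α' β') ∧
     (∀ a, a ≠ Γ.tau → ∀ α', Γ.Step a α α' →
        ∃ β'' β', RelChain (Γ.StepR R Γ.tau) r β (nf R β) β'' ∧
          Γ.StepR R a β'' β' ∧ r α' β'))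

/-- `R`-bisimilarity `≃_R` : the largest `R`-bisimulation. -/
def RBisim (Γ : BPA C A) (R : Set C) (α β : List C) : Prop :=
  ∃ r, Γ.IsRBisim R r ∧ r α β

/-- `Id_R = {X ∈ C : X ≃_R ε}`. -/
def IdR (Γ : BPA C A) (R : Set C) : Set C := {X | Γ.RBisim R [X] []}

/-- `Rd_R(γ) = {X ∈ C : Xγ ≃_R γ}`. -/
def RdR (Γ : BPA C A) (R : Set C) (γ : List C) : Set C :=
  {X | Γ.RBisim R (X :: γ) γ}

/-- An admissible reference set: `R = Id_R`. -/
def Admissible (Γ : BPA C A) (R : Set C) : Prop := R = Γ.IdR R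

end BPA

/-! Fix an `R`-bisimulation `r` with `α r α''` and let `E` be the set of processes `r`-related to
some state of the path `α ⟹_R α''`; then `r ∪ E × E` is again an `R`-bisimulation. Every state of
the path lies in `E`, so a response to a move that leaves `E` propagates backwards along the path:
from any state of `E` it reaches `α`, crosses to `α''` through `r`, and comes back from `α''` to
every state of the path, hence to every state of `E`. -/

namespace Relation.ReflTransGen

theorem pred_of_pred_and {α : Type*} {s : α → α → Prop} {P : α → Prop} {a b : α}
    (h : ReflTransGen (fun x y => s x y ∧ P y) a b) (ha : P a) : P b := by
  rcases h.cases_tail with rfl | ⟨c, -, -, hc⟩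
  exacts [ha, hc]

end Relation.ReflTransGen

theorem Equivalence.sup_prod_of_closed {α : Type*} {r : α → α → Prop} {E : α → Prop}
    (hr : Equivalence r) (hE : ∀ ⦃x y⦄, r x y → E x → E y) :
    Equivalence fun x y => r x y ∨ E x ∧ E y where
  refl x := .inl (hr.refl x)
  symm
    | .inl h => .inl (hr.symm h)
    | .inr ⟨hx, hy⟩ => .inr ⟨hy, hx⟩
  trans
    | .inl hxy, .inl hyz => .inl (hr.trans hxy hyz)
    | .inl hxy, .inr ⟨hy, hz⟩ => .inr ⟨hE (hr.symm hxy) hy, hz⟩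
    | .inr ⟨hx, hy⟩, .inl hyz => .inr ⟨hx, hE hyz hy⟩
    | .inr ⟨hx, _⟩, .inr ⟨_, hz⟩ => .inr ⟨hx, hz⟩

namespace BPA

variable {C A : Type} {Γ : BPA C A} {R : Set C}

section NormalForm

open Classical in
theorem nf_eq_rdropWhile (R : Set C) (α : List C) :
    nf R α = α.rdropWhile fun X => decide (X ∈ R) := rfl

open Classical in
theorem exists_eq_nf_append (R : Set C) (α : List C) :
    ∃ b, (∀ X ∈ b, X ∈ R) ∧ α = nf R α ++ b :=
  ⟨α.rtakeWhile fun X => decide (X ∈ R),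
    fun _ hX => of_decide_eq_true (List.mem_rtakeWhile_imp (p := fun X => decide (X ∈ R)) hX),
    List.rdropWhile_append_rtakeWhile.symm⟩

theorem inNF_nf (R : Set C) (α : List C) : InNF R (nf R α) := by
  simp only [InNF, nf_eq_rdropWhile, List.rdropWhile_idempotent]

theorem req_nf (R : Set C) (α : List C) : REq R α (nf R α) := by
  obtain ⟨b, hb, hα⟩ := exists_eq_nf_append R α
  exact ⟨nf R α, b, [], hα, (List.append_nil _).symm, hb, by simp⟩

theorem StepR.inNF_right {ℓ : A} {ζ η : List C} (h : Γ.StepR R ℓ ζ η) : InNF R η := by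
  obtain ⟨-, ν, -, rfl, -⟩ := h
  exact inNF_nf R ν

theorem InNF.of_tauStarR {α β : List C} (hα : InNF R α) (h : Γ.TauStarR R α β) : InNF R β := by
  rcases h.cases_tail with rfl | ⟨_, -, hs⟩
  exacts [hα, hs.inNF_right]

end NormalForm

section Ground

theorem Step.append_right {ℓ : A} {p q : List C} (h : Γ.Step ℓ p q) (s : List C) :
    Γ.Step ℓ (p ++ s) (q ++ s) := by
  obtain ⟨X, γ, β, hX, rfl, rfl⟩ := h
  exact ⟨X, γ, β ++ s, hX, rfl, List.append_assoc _ _ _⟩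

theorem TauStar.append_right {p q : List C} (h : Γ.TauStar p q) (s : List C) :
    Γ.TauStar (p ++ s) (q ++ s) :=
  ReflTransGen.lift (· ++ s) (fun _ _ hpq => Step.append_right hpq s) _ _ h

theorem tauStar_nil_append {p q : List C} (hp : Γ.TauStar p []) (hq : Γ.TauStar q []) :
    Γ.TauStar (p ++ q) [] :=
  (hp.append_right q).trans hq

theorem tauStar_nil_of_append {z : List C} (h : Γ.TauStar z []) :
    ∀ p q, z = p ++ q → Γ.TauStar p [] := by
  induction h using ReflTransGen.head_induction_on with
  | refl =>
    rintro p q hpq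
    obtain ⟨rfl, -⟩ := List.append_eq_nil_iff.mp hpq.symm
    exact .refl
  | head hstep _ ih =>
    rintro (_ | ⟨X, p⟩) q rfl
    · exact .refl
    · obtain ⟨Y, γ, β, hY, hXp, rfl⟩ := hstep
      obtain ⟨rfl, rfl⟩ := List.cons_eq_cons.mp hXp
      exact .head ⟨X, γ, p, hY, rfl, rfl⟩ (ih (γ ++ p) q (List.append_assoc _ _ _).symm)

theorem tauStar_nil_of_forall_mem (hR : R ⊆ Γ.GroundC) :
    ∀ {b : List C}, (∀ X ∈ b, X ∈ R) → Γ.TauStar b []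
  | [], _ => .refl
  | X :: _, hb =>
    tauStar_nil_append (p := [X]) (hR (hb X List.mem_cons_self))
      (tauStar_nil_of_forall_mem hR fun Y hY => hb Y (List.mem_cons_of_mem X hY))

theorem tauStar_nf_nil_iff (hR : R ⊆ Γ.GroundC) (α : List C) :
    Γ.TauStar (nf R α) [] ↔ Γ.TauStar α [] := by
  obtain ⟨b, hb, hα⟩ := exists_eq_nf_append R α
  refine ⟨fun h => ?_, fun h => tauStar_nil_of_append h _ b hα⟩
  rw [hα]
  exact tauStar_nil_append h (tauStar_nil_of_forall_mem hR hb)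

theorem TauStarR.tauStar_nil (hR : R ⊆ Γ.GroundC) {u v : List C} (h : Γ.TauStarR R u v)
    (hv : Γ.TauStar v []) : Γ.TauStar u [] := by
  induction h using ReflTransGen.head_induction_on with
  | refl => exact hv
  | head hstep _ ih =>
    obtain ⟨μ, ν, rfl, rfl, hμν⟩ := hstep
    rw [tauStar_nf_nil_iff hR] at ih ⊢
    exact .head hμν ih

end Ground

section Response

variable {r : List C → List C → Prop} {E : List C → Prop}

abbrev TauPathIn (Γ : BPA C A) (R : Set C) (E : List C → Prop) : List C → List C → Prop :=
  ReflTransGen fun u v => Γ.StepR R Γ.tau u v ∧ E v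

/-- From `u`, a move to `x'` is answered inside `E` up to the answering step, which for `ℓ = τ`
must leave `E`. -/
def Escapes (Γ : BPA C A) (R : Set C) (r : List C → List C → Prop) (E : List C → Prop)
    (ℓ : A) (x' u : List C) : Prop :=
  ∃ δ'' δ', TauPathIn Γ R E u δ'' ∧ Γ.StepR R ℓ δ'' δ' ∧ (ℓ = Γ.tau → ¬ E δ') ∧ r x' δ'

theorem IsRBisim.exists_response (hr : Γ.IsRBisim R r) {ℓ : A} {w w' z : List C}
    (hs : Γ.StepR R ℓ w w') (hwz : r w z) (hz : InNF R z) (hτ : ℓ = Γ.tau → ¬ r w w') :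
    ∃ β'' β', TauPathIn Γ R (r z) z β'' ∧ Γ.StepR R ℓ β'' β' ∧ r w' β' := by
  obtain ⟨μ, ν, rfl, rfl, hμν⟩ := hs
  have hμ : r μ (nf R μ) := hr.2.1 _ _ (req_nf R μ)
  have hν : r ν (nf R ν) := hr.2.1 _ _ (req_nf R ν)
  have hμz : r μ z := hr.1.trans hμ hwz
  have hclause := hr.2.2 μ z hμz
  rw [hz] at hclause
  by_cases hℓ : ℓ = Γ.tau
  · subst hℓ
    have hnμν : ¬ r μ ν := fun h => hτ rfl (hr.1.trans (hr.1.trans (hr.1.symm hμ) h) hν)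
    obtain ⟨β'', β', hc, hs, -, hνβ'⟩ := hclause.2.1 ν hμν hnμν
    exact ⟨β'', β', hc, hs, hr.1.trans (hr.1.symm hν) hνβ'⟩
  · obtain ⟨β'', β', hc, hs, hνβ'⟩ := hclause.2.2 ℓ hℓ ν hμν
    exact ⟨β'', β', hc, hs, hr.1.trans (hr.1.symm hν) hνβ'⟩

theorem Escapes.of_rel_move (hr : Γ.IsRBisim R r) {ℓ : A} {x' y' u : List C} (hxy : r x' y')
    (h : Escapes Γ R r E ℓ y' u) : Escapes Γ R r E ℓ x' u := by
  obtain ⟨δ'', δ', hc, hs, hout, hy'⟩ := h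
  exact ⟨δ'', δ', hc, hs, hout, hr.1.trans hxy hy'⟩

theorem Escapes.of_tauPathIn {ℓ : A} {x' u v : List C} (huv : TauPathIn Γ R E u v)
    (h : Escapes Γ R r E ℓ x' v) : Escapes Γ R r E ℓ x' u := by
  obtain ⟨δ'', δ', hc, hs, hout, hx'⟩ := h
  exact ⟨δ'', δ', huv.trans hc, hs, hout, hx'⟩

theorem tauPathIn_of_rel {z v : List C} (hE : ∀ ⦃x y⦄, r x y → E x → E y) (hz : E z)
    (h : TauPathIn Γ R (r z) z v) : TauPathIn Γ R E z v :=
  ReflTransGen.mono (fun _ _ h => ⟨h.1, hE h.2 hz⟩) _ _ h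

theorem escapes_of_stepR (hr : Γ.IsRBisim R r) (hE : ∀ ⦃x y⦄, r x y → E x → E y) {ℓ : A}
    {w w' z : List C} (hs : Γ.StepR R ℓ w w') (hw : E w) (hout : ℓ = Γ.tau → ¬ E w')
    (hwz : r w z) (hz : InNF R z) : Escapes Γ R r E ℓ w' z := by
  obtain ⟨β'', β', hc, hs', hw'β'⟩ :=
    hr.exists_response hs hwz hz fun hℓ h => hout hℓ (hE h hw)
  exact ⟨β'', β', tauPathIn_of_rel hE (hE hwz hw) hc, hs',
    fun hℓ h => hout hℓ (hE (hr.1.symm hw'β') h), hw'β'⟩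

theorem TauPathIn.simulate (hr : Γ.IsRBisim R r) (hE : ∀ ⦃x y⦄, r x y → E x → E y)
    {p w : List C} (hpw : TauPathIn Γ R E p w) (hp : E p) {z : List C} (hpz : r p z)
    (hz : InNF R z) : ∃ z', TauPathIn Γ R E z z' ∧ r w z' ∧ InNF R z' := by
  induction hpw with
  | refl => exact ⟨z, .refl, hpz, hz⟩
  | @tail w₁ w₂ hpw₁ hw₁w₂ ih =>
    obtain ⟨z₁, hzz₁, hw₁z₁, hz₁⟩ := ih
    obtain ⟨hs, hw₂⟩ := hw₁w₂
    by_cases hr₁₂ : r w₁ w₂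
    · exact ⟨z₁, hzz₁, hr.1.trans (hr.1.symm hr₁₂) hw₁z₁, hz₁⟩
    · obtain ⟨β'', β', hc, hs', hw₂β'⟩ := hr.exists_response hs hw₁z₁ hz₁ fun _ => hr₁₂
      have hz₁E : E z₁ := hE hw₁z₁ (ReflTransGen.pred_of_pred_and hpw₁ hp)
      exact ⟨β', (hzz₁.trans (tauPathIn_of_rel hE hz₁E hc)).tail ⟨hs', hE hw₂β' hw₂⟩, hw₂β',
        hs'.inNF_right⟩

theorem Escapes.transfer (hr : Γ.IsRBisim R r) (hE : ∀ ⦃x y⦄, r x y → E x → E y)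
    {ℓ : A} {x' u v : List C} (h : Escapes Γ R r E ℓ x' u) (huv : r u v) (hu : E u)
    (hv : InNF R v) : Escapes Γ R r E ℓ x' v := by
  obtain ⟨δ'', δ', hc, hs, hout, hx'⟩ := h
  obtain ⟨z', hvz', hδz', hz'⟩ := hc.simulate hr hE hu huv hv
  have hδ'' : E δ'' := ReflTransGen.pred_of_pred_and hc hu
  exact (Escapes.of_tauPathIn hvz' (escapes_of_stepR hr hE hs hδ'' hout hδz' hz')).of_rel_move
    hr hx'

end Response

section Merge

variable {r : List C → List C → Prop} {E : List C → Prop}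

theorem escapes_of_step (hr : Γ.IsRBisim R r) (hE : ∀ ⦃x y⦄, r x y → E x → E y) {ℓ : A}
    {x x' : List C} (hs : Γ.Step ℓ x x') (hx : E x) (hout : ℓ = Γ.tau → ¬ E x') :
    Escapes Γ R r E ℓ x' (nf R x) :=
  have hx' : r x' (nf R x') := hr.2.1 _ _ (req_nf R x')
  (escapes_of_stepR hr hE ⟨x, x', rfl, rfl, hs⟩ (hE (hr.2.1 _ _ (req_nf R x)) hx)
    (fun hℓ h => hout hℓ (hE (hr.1.symm hx') h)) (hr.1.refl _) (inNF_nf R x)).of_rel_move hr hx'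

theorem exists_response_sup_of_escapes (hr : Γ.IsRBisim R r)
    (hE : ∀ ⦃x y⦄, r x y → E x → E y) {ℓ : A} {x' y : List C} (hy : E y)
    (h : Escapes Γ R r E ℓ x' (nf R y)) :
    ∃ β'' β', RelChain (Γ.StepR R Γ.tau) (fun x y => r x y ∨ E x ∧ E y) y (nf R y) β'' ∧
      Γ.StepR R ℓ β'' β' ∧ (ℓ = Γ.tau → ¬ (r β'' β' ∨ E β'' ∧ E β')) ∧
      (r x' β' ∨ E x' ∧ E β') := by
  obtain ⟨δ'', δ', hc, hs, hout, hx'⟩ := h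
  have hδ'' : E δ'' := ReflTransGen.pred_of_pred_and hc (hE (hr.2.1 _ _ (req_nf R y)) hy)
  refine ⟨δ'', δ', ReflTransGen.mono (fun _ _ h => ⟨h.1, .inr ⟨hy, h.2⟩⟩) _ _ hc, hs,
    fun hℓ => ?_, .inl hx'⟩
  rintro (h | ⟨-, h⟩)
  exacts [hout hℓ (hE h hδ''), hout hℓ h]

theorem IsRBisim.sup_prod (hr : Γ.IsRBisim R r) (hE : ∀ ⦃x y⦄, r x y → E x → E y)
    (hground : ∀ u v, E u → E v → Γ.TauStar u [] → Γ.TauStar v [])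
    (hlinked : ∀ ℓ x' u v, E u → E v → InNF R v →
      Escapes Γ R r E ℓ x' u → Escapes Γ R r E ℓ x' v) :
    Γ.IsRBisim R fun x y => r x y ∨ E x ∧ E y := by
  have hEnf : ∀ {x}, E x → E (nf R x) := fun hx => hE (hr.2.1 _ _ (req_nf R _)) hx
  have hE_sup : ∀ {ℓ x x' y}, Γ.Step ℓ x x' → E x → E y → (ℓ = Γ.tau → ¬ E x') →
      ∃ β'' β', RelChain (Γ.StepR R Γ.tau) (fun x y => r x y ∨ E x ∧ E y) y (nf R y) β'' ∧
        Γ.StepR R ℓ β'' β' ∧ (ℓ = Γ.tau → ¬ (r β'' β' ∨ E β'' ∧ E β')) ∧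
        (r x' β' ∨ E x' ∧ E β') :=
    fun hs hx hy hout => exists_response_sup_of_escapes hr hE hy
      (hlinked _ _ _ _ (hEnf hx) (hEnf hy) (inNF_nf R _) (escapes_of_step hr hE hs hx hout))
  refine ⟨hr.1.sup_prod_of_closed hE, fun x y h => .inl (hr.2.1 x y h), fun x y hxy => ⟨?_, ?_, ?_⟩⟩
  · rcases hxy with h | ⟨hx, hy⟩
    exacts [(hr.2.2 x y h).1, hground x y hx hy]
  · intro x' hs hn
    rcases hxy with h | ⟨hx, hy⟩
    · obtain ⟨β'', β', hc, hs', hn', hx'β'⟩ := (hr.2.2 x y h).2.1 x' hs fun h' => hn (.inl h')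
      refine ⟨β'', β', ReflTransGen.mono (fun _ _ h => ⟨h.1, .inl h.2⟩) _ _ hc, hs', ?_,
        .inl hx'β'⟩
      rintro (h'' | ⟨hβ'', hβ'⟩)
      · exact hn' h''
      · have hyβ'' : r y β'' := ReflTransGen.pred_of_pred_and hc (hr.2.1 _ _ (req_nf R y))
        exact hn (.inr ⟨hE (hr.1.symm (hr.1.trans h hyβ'')) hβ'', hE (hr.1.symm hx'β') hβ'⟩)
    · obtain ⟨β'', β', hc, hs', hn', hx'β'⟩ := hE_sup hs hx hy fun _ h' => hn (.inr ⟨hx, h'⟩)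
      exact ⟨β'', β', hc, hs', hn' rfl, hx'β'⟩
  · intro a ha x' hs
    rcases hxy with h | ⟨hx, hy⟩
    · obtain ⟨β'', β', hc, hs', hx'β'⟩ := (hr.2.2 x y h).2.2 a ha x' hs
      exact ⟨β'', β', ReflTransGen.mono (fun _ _ h => ⟨h.1, .inl h.2⟩) _ _ hc, hs', .inl hx'β'⟩
    · obtain ⟨β'', β', hc, hs', -, hx'β'⟩ := hE_sup hs hx hy fun h => absurd h ha
      exact ⟨β'', β', hc, hs', hx'β'⟩

end Merge

section Path

variable {r : List C → List C → Prop} {α α'' : List C}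

def PathClass (Γ : BPA C A) (R : Set C) (r : List C → List C → Prop) (α α'' z : List C) :
    Prop :=
  ∃ p, Γ.TauStarR R α p ∧ Γ.TauStarR R p α'' ∧ r z p

theorem pathClass_of_rel (hr : Γ.IsRBisim R r) ⦃x y : List C⦄ (hxy : r x y)
    (hx : PathClass Γ R r α α'' x) : PathClass Γ R r α α'' y :=
  let ⟨p, hαp, hpα'', hxp⟩ := hx
  ⟨p, hαp, hpα'', hr.1.trans (hr.1.symm hxy) hxp⟩

theorem tauPathIn_pathClass (hr : Γ.IsRBisim R r) {u v : List C} (hαu : Γ.TauStarR R α u)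
    (huv : Γ.TauStarR R u v) (hvα'' : Γ.TauStarR R v α'') :
    TauPathIn Γ R (PathClass Γ R r α α'') u v := by
  induction huv with
  | refl => exact .refl
  | @tail w₁ w₂ huw₁ hs ih =>
    exact (ih (ReflTransGen.head hs hvα'')).tail
      ⟨hs, w₂, ReflTransGen.trans hαu (huw₁.tail hs), hvα'', hr.1.refl w₂⟩

theorem PathClass.tauStar_nil (hR : R ⊆ Γ.GroundC) (hr : Γ.IsRBisim R r) (hαα'' : r α α'')
    {u v : List C} (hu : PathClass Γ R r α α'' u) (hv : PathClass Γ R r α α'' v)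
    (hug : Γ.TauStar u []) : Γ.TauStar v [] := by
  obtain ⟨p, hαp, -, hup⟩ := hu
  obtain ⟨q, -, hqα'', hvq⟩ := hv
  have hαg : Γ.TauStar α [] := TauStarR.tauStar_nil hR hαp ((hr.2.2 u p hup).1 hug)
  have hqg : Γ.TauStar q [] := TauStarR.tauStar_nil hR hqα'' ((hr.2.2 α α'' hαα'').1 hαg)
  exact (hr.2.2 q v (hr.1.symm hvq)).1 hqg

theorem Escapes.of_pathClass (hr : Γ.IsRBisim R r) (hα : InNF R α) (hαα'' : r α α'')
    {ℓ : A} {x' u v : List C} (hu : PathClass Γ R r α α'' u) (hv : PathClass Γ R r α α'' v)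
    (hvnf : InNF R v) (h : Escapes Γ R r (PathClass Γ R r α α'') ℓ x' u) :
    Escapes Γ R r (PathClass Γ R r α α'') ℓ x' v := by
  have hE := pathClass_of_rel hr (α := α) (α'' := α'')
  have hmem : ∀ {w}, Γ.TauStarR R α w → Γ.TauStarR R w α'' → PathClass Γ R r α α'' w :=
    fun hαw hwα'' => ⟨_, hαw, hwα'', hr.1.refl _⟩
  obtain ⟨p, hαp, hpα'', hup⟩ := hu
  obtain ⟨q, hαq, hqα'', hvq⟩ := hv
  have hαα''path : Γ.TauStarR R α α'' := ReflTransGen.trans hαp hpα''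
  have hp := h.transfer hr hE hup ⟨p, hαp, hpα'', hup⟩ (hα.of_tauStarR hαp)
  have hα_ := hp.of_tauPathIn (tauPathIn_pathClass hr .refl hαp hpα'')
  have hα''_ := hα_.transfer hr hE hαα'' (hmem .refl hαα''path) (hα.of_tauStarR hαα''path)
  have hq := hα''_.of_tauPathIn (tauPathIn_pathClass hr hαq hqα'' .refl)
  exact hq.transfer hr hE (hr.1.symm hvq) (hmem hαq hqα'') hvnf

end Path

end BPA

theorem computation_lemma_R_general {C A : Type} (Γ : BPA C A)
    (R : Set C) (hR : R ⊆ Γ.GroundC) (α α' α'' : List C)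
    (hα : BPA.InNF R α)
    (h1 : Γ.TauStarR R α α') (h2 : Γ.TauStarR R α' α'')
    (h3 : Γ.RBisim R α α'') : Γ.RBisim R α' α := by
  obtain ⟨r, hr, hαα''⟩ := h3
  have hmerge := hr.sup_prod (BPA.pathClass_of_rel hr)
    (fun _ _ hu hv => BPA.PathClass.tauStar_nil hR hr hαα'' hu hv)
    (fun _ _ _ _ hu hv hvnf h => h.of_pathClass hr hα hαα'' hu hv hvnf)
  exact ⟨_, hmerge, .inr ⟨⟨α', h1, h2, hr.1.refl _⟩, ⟨α, .refl, h1.trans h2, hr.1.refl _⟩⟩⟩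

/-- **Computation Lemma for `≃_R`.**  For processes in `R`-normal form, if
`α ⟹_R α' ⟹_R α''` and `α ≃_R α''`, then `α' ≃_R α`. -/
theorem computation_lemma_R {C A : Type} (Γ : BPA C A) (hΓ : Γ.Normed)
    (R : Set C) (hR : R ⊆ Γ.GroundC) (α α' α'' : List C)
    (hα : BPA.InNF R α) (hα' : BPA.InNF R α') (hα'' : BPA.InNF R α'')
    (h1 : Γ.TauStarR R α α') (h2 : Γ.TauStarR R α' α'')
    (h3 : Γ.RBisim R α α'') : Γ.RBisim R α' α :=
  computation_lemma_R_general Γ R hR α α' α'' hα h1 h2 h3
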